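/- arXiv:1704.01747 — 7 statements merged into one kernel-verified Lean document; each statement's English description precedes it below -/
import Mathlib

section
/- Let 0 < ρ₋ < ρ₊ and K, L > 0. Define ρ̃ := (K²ρ₊ + L²ρ₋)/(K² + L²). Then ρ̃ lies strictly between ρ₋ and ρ₊, and for all ρ₁ with ρ₋ < ρ₁ < ρ̃ one has K²ρ₊ − L²ρ₋ + KL(ρ₋·√((ρ₊−ρ₁)/(ρ₁−ρ₋)) − ρ₊·√((ρ₁−ρ₋)/(ρ₊−ρ₁))) > 0. -/
/-!
Put `a = ρ₁ - ρ₋`, `b = ρ₊ - ρ₁`, `s = √a`, `t = √b`. Multiplying the expression by `s t` gives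
`(K t - L s) (K ρ₊ s + L ρ₋ t)`. The second factor is positive, and the first is positive exactly
when `L² a < K² b`, i.e. when `ρ₁ < ρ̃`.
-/

open Real

lemma weighted_mean_mem_Ioo {a b p q : ℝ} (hab : a < b) (hp : 0 < p) (hq : 0 < q) :
    (p * b + q * a) / (p + q) ∈ Set.Ioo a b := by
  have hpq : 0 < p + q := add_pos hp hq
  constructor
  · rw [lt_div_iff₀ hpq]; nlinarith
  · rw [div_lt_iff₀ hpq]; nlinarith

lemma lt_weighted_mean_iff {a b p q x : ℝ} (hpq : 0 < p + q) :
    x < (p * b + q * a) / (p + q) ↔ q * (x - a) < p * (b - x) := by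
  rw [lt_div_iff₀ hpq]
  constructor <;> intro h <;> linarith

lemma mul_sqrt_lt_mul_sqrt {a b K L : ℝ} (hK : 0 ≤ K) (ha : 0 ≤ a) (hb : 0 ≤ b)
    (h : L ^ 2 * a < K ^ 2 * b) : L * √a < K * √b := by
  refine lt_of_pow_lt_pow_left₀ 2 (by positivity) ?_
  rwa [mul_pow, mul_pow, sq_sqrt ha, sq_sqrt hb]

lemma sq_mul_sub_sq_mul_add_eq_mul_div {K L ρm ρp s t : ℝ} (hs : s ≠ 0) (ht : t ≠ 0) :
    K ^ 2 * ρp - L ^ 2 * ρm + K * L * (ρm * (t / s) - ρp * (s / t)) =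
      (K * t - L * s) * (K * ρp * s + L * ρm * t) / (s * t) := by
  field_simp
  ring

theorem rho_tilde_between_and_pos (ρm ρp K L : ℝ) (hρm : 0 < ρm) (hρp : ρm < ρp)
    (hK : 0 < K) (hL : 0 < L) :
    (ρm < (K ^ 2 * ρp + L ^ 2 * ρm) / (K ^ 2 + L ^ 2) ∧
      (K ^ 2 * ρp + L ^ 2 * ρm) / (K ^ 2 + L ^ 2) < ρp) ∧
    ∀ ρ₁ : ℝ, ρm < ρ₁ → ρ₁ < (K ^ 2 * ρp + L ^ 2 * ρm) / (K ^ 2 + L ^ 2) →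
      K ^ 2 * ρp - L ^ 2 * ρm +
        K * L * (ρm * Real.sqrt ((ρp - ρ₁) / (ρ₁ - ρm)) -
          ρp * Real.sqrt ((ρ₁ - ρm) / (ρp - ρ₁))) > 0 := by
  have hmean := weighted_mean_mem_Ioo hρp (pow_pos hK 2) (pow_pos hL 2)
  refine ⟨hmean, fun ρ₁ h₁ h₂ => ?_⟩
  have ha : 0 < ρ₁ - ρm := sub_pos.2 h₁
  have hb : 0 < ρp - ρ₁ := sub_pos.2 (h₂.trans hmean.2)
  have hcond := (lt_weighted_mean_iff (by positivity)).1 h₂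
  have hfirst : 0 < K * √(ρp - ρ₁) - L * √(ρ₁ - ρm) :=
    sub_pos.2 (mul_sqrt_lt_mul_sqrt hK.le ha.le hb.le hcond)
  have hs := sqrt_pos.2 ha
  have ht := sqrt_pos.2 hb
  have hsecond : 0 < K * ρp * √(ρ₁ - ρm) + L * ρm * √(ρp - ρ₁) := by
    have := hρm.trans hρp
    positivity
  rw [sqrt_div hb.le, sqrt_div ha.le, sq_mul_sub_sq_mul_add_eq_mul_div hs.ne' ht.ne']
  exact div_pos (mul_pos hfirst hsecond) (mul_pos hs ht)
end

section
/- Let p(ρ) = ρ^γ with γ > 1, 0 < ρ₋ < ρ₊, and K, L > 0. Define ε₁(ρ₁) = (p(ρ₊) − p(ρ₁))/ρ₁ − (ρ₊/ρ₁)·(L√(1 − ρ₋/ρ₁) − K√(ρ₊/ρ₁ − 1))² for ρ₁ ∈ (ρ₋, ρ₊). Then ε₁(ρ̃) > 0 where ρ̃ = (K²ρ₊ + L²ρ₋)/(K² + L²), and ε₁(ρ₁) → (p(ρ₊)−p(ρ₊))/ρ₊ − (ρ₊/ρ₊)L²(1 − ρ₋/ρ₊) < 0 as ρ₁ → ρ₊⁻.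 -/
open Real

lemma aux_h1 (ρm ρp K L ρt : ℝ) (hKL : K ^ 2 + L ^ 2 ≠ 0) (hρt : ρt ≠ 0)
    (key : ρt * (K ^ 2 + L ^ 2) = K ^ 2 * ρp + L ^ 2 * ρm) :
    1 - ρm / ρt = K ^ 2 * ((ρp - ρm) / ((K ^ 2 + L ^ 2) * ρt)) := by
  field_simp
  linear_combination key

lemma aux_h2 (ρm ρp K L ρt : ℝ) (hKL : K ^ 2 + L ^ 2 ≠ 0) (hρt : ρt ≠ 0)
    (key : ρt * (K ^ 2 + L ^ 2) = K ^ 2 * ρp + L ^ 2 * ρm) :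
    ρp / ρt - 1 = L ^ 2 * ((ρp - ρm) / ((K ^ 2 + L ^ 2) * ρt)) := by
  field_simp
  linear_combination -key

theorem eps1_rho_tilde_pos_and_limit_neg (γ ρm ρp K L : ℝ) (hγ : 1 < γ)
    (hρm : 0 < ρm) (hρp : ρm < ρp) (hK : 0 < K) (hL : 0 < L) :
    (fun ρ₁ : ℝ => (ρp ^ γ - ρ₁ ^ γ) / ρ₁ -
        (ρp / ρ₁) * (L * Real.sqrt (1 - ρm / ρ₁) - K * Real.sqrt (ρp / ρ₁ - 1)) ^ 2)
      ((K ^ 2 * ρp + L ^ 2 * ρm) / (K ^ 2 + L ^ 2)) > 0 ∧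
    Filter.Tendsto
      (fun ρ₁ : ℝ => (ρp ^ γ - ρ₁ ^ γ) / ρ₁ -
        (ρp / ρ₁) * (L * Real.sqrt (1 - ρm / ρ₁) - K * Real.sqrt (ρp / ρ₁ - 1)) ^ 2)
      (nhdsWithin ρp (Set.Iio ρp))
      (nhds ((ρp ^ γ - ρp ^ γ) / ρp - (ρp / ρp) * L ^ 2 * (1 - ρm / ρp))) ∧
    (ρp ^ γ - ρp ^ γ) / ρp - (ρp / ρp) * L ^ 2 * (1 - ρm / ρp) < 0 := by
  have hρp0 : 0 < ρp := hρm.trans hρp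
  have hKL : 0 < K ^ 2 + L ^ 2 := by positivity
  set ρt : ℝ := (K ^ 2 * ρp + L ^ 2 * ρm) / (K ^ 2 + L ^ 2) with hρt
  have hρt1 : ρm < ρt := by
    rw [hρt, lt_div_iff₀ hKL]
    nlinarith [mul_pos (pow_pos hK 2) (sub_pos.mpr hρp)]
  have hρt2 : ρt < ρp := by
    rw [hρt, div_lt_iff₀ hKL]
    nlinarith [mul_pos (pow_pos hL 2) (sub_pos.mpr hρp)]
  have hρt0 : 0 < ρt := hρm.trans hρt1
  have key : ρt * (K ^ 2 + L ^ 2) = K ^ 2 * ρp + L ^ 2 * ρm := by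
    rw [hρt]; field_simp
  refine ⟨?_, ?_, ?_⟩
  · -- Part 1
    simp only
    set c : ℝ := (ρp - ρm) / ((K ^ 2 + L ^ 2) * ρt) with hc
    have hc0 : 0 ≤ c := by
      apply div_nonneg (by linarith) (by positivity)
    have hρtne : ρt ≠ 0 := hρt0.ne'
    have hKLne : K ^ 2 + L ^ 2 ≠ 0 := hKL.ne'
    have h1 : 1 - ρm / ρt = K ^ 2 * c := by
      rw [hc]; exact aux_h1 ρm ρp K L ρt hKLne hρtne key
    have h2 : ρp / ρt - 1 = L ^ 2 * c := by
      rw [hc]; exact aux_h2 ρm ρp K L ρt hKLne hρtne key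
    have hsq : L * Real.sqrt (1 - ρm / ρt) - K * Real.sqrt (ρp / ρt - 1) = 0 := by
      rw [h1, h2, Real.sqrt_mul (sq_nonneg K), Real.sqrt_mul (sq_nonneg L),
        Real.sqrt_sq hK.le, Real.sqrt_sq hL.le]
      ring
    rw [hsq]
    have hpow : ρt ^ γ < ρp ^ γ :=
      Real.rpow_lt_rpow hρt0.le hρt2 (by linarith)
    have : (0:ℝ) < (ρp ^ γ - ρt ^ γ) / ρt := div_pos (by linarith) hρt0
    simpa using this
  · -- Part 2: continuity
    have hcont : ContinuousAt (fun ρ₁ : ℝ => (ρp ^ γ - ρ₁ ^ γ) / ρ₁ -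
        (ρp / ρ₁) * (L * Real.sqrt (1 - ρm / ρ₁) - K * Real.sqrt (ρp / ρ₁ - 1)) ^ 2) ρp := by
      have hne : ρp ≠ 0 := hρp0.ne'
      have h1 : ContinuousAt (fun ρ₁ : ℝ => ρ₁ ^ γ) ρp :=
        Real.continuousAt_rpow_const ρp γ (Or.inl hne)
      fun_prop (disch := assumption)
    have hval : (ρp ^ γ - ρp ^ γ) / ρp -
        (ρp / ρp) * (L * Real.sqrt (1 - ρm / ρp) - K * Real.sqrt (ρp / ρp - 1)) ^ 2
        = (ρp ^ γ - ρp ^ γ) / ρp - (ρp / ρp) * L ^ 2 * (1 - ρm / ρp) := by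
      have h0 : ρp / ρp - 1 = 0 := by field_simp; ring
      have hnn : 0 ≤ 1 - ρm / ρp := by
        rw [sub_nonneg, div_le_one hρp0]; exact hρp.le
      rw [h0, Real.sqrt_zero, mul_zero, sub_zero, mul_pow, Real.sq_sqrt hnn]
      ring
    have h := hcont.tendsto
    try simp only at h ⊢
    rw [hval] at h
    exact h.mono_left nhdsWithin_le_nhds
  · have h1 : ρp / ρp = 1 := by field_simp
    have hnn : 0 < 1 - ρm / ρp := by
      rw [sub_pos, div_lt_one hρp0]; exact hρp
    rw [h1, sub_self, zero_div, one_mul, zero_sub]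
    have := mul_pos (pow_pos hL 2) hnn
    linarith
end

section
/- Under the hypotheses p(ρ)=ρ^γ (γ>1), 0<ρ₋<ρ₊, K,L>0, define ε₁(ρ₁) = (p(ρ₊)−p(ρ₁))/ρ₁ − (ρ₊/ρ₁)(L√(1−ρ₋/ρ₁) − K√(ρ₊/ρ₁−1))² on (ρ₋,ρ₊), and assume ε₁(ρ₋⁺ limit) > 0 (equivalently (p(ρ₊)−p(ρ₋))/ρ₋ > K²ρ₊(ρ₊−ρ₋)/ρ₋²). Then there exists a unique ρ̄ ∈ (ρ₋, ρ₊) such that ε₁ > 0 on (ρ₋, ρ̄) and ε₁ < 0 on (ρ̄, ρ₊). -/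
/-!
Write `S = √((ρ₊^γ - ρ^γ)/ρ₊)`, `A = √(1 - ρ₋/ρ)` and `B = √(ρ₊/ρ - 1)`, so that
`ε₁ = (ρ₊/ρ) (S + K B - L A) (S - K B + L A)`. The first factor is continuous and strictly
decreasing, positive at `ρ₋` and negative at `ρ₊`, hence has exactly one zero `ρ̄`. The second
factor is positive because `S > K B`, i.e. `K² ρ₊ (ρ₊ - ρ) < (ρ₊^γ - ρ^γ) ρ`: the difference of the
two sides is concave in `ρ` (since `ρ^(γ+1)` is convex), vanishes at `ρ₊`, and is positive at `ρ₋`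
by the hypothesis on `ε₁(ρ₋⁺)`.
-/

open Real Set

theorem ConcaveOn.pos_of_mem_Ico {f : ℝ → ℝ} {s : Set ℝ} {a b x : ℝ} (hf : ConcaveOn ℝ s f)
    (ha : a ∈ s) (hb : b ∈ s) (hfa : 0 < f a) (hfb : 0 ≤ f b) (hx : x ∈ Ico a b) : 0 < f x := by
  have hab : 0 < b - a := by linarith [hx.1, hx.2]
  set t := (x - a) / (b - a)
  have ht0 : 0 ≤ t := div_nonneg (by linarith [hx.1]) hab.le
  have ht1 : t < 1 := (div_lt_one hab).2 (by linarith [hx.2])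
  have hcomb : (1 - t) • a + t • b = x := by
    simp only [smul_eq_mul, t]
    field_simp
    ring
  calc 0 < (1 - t) • f a + t • f b := by
        simp only [smul_eq_mul]
        nlinarith [mul_nonneg ht0 hfb]
    _ ≤ f x := hcomb ▸ hf.2 ha hb (by linarith) ht0 (by ring)

theorem le_of_pos_of_neg_on_Ioo {g : ℝ → ℝ} {a b c d : ℝ} (had : a < d) (hcb : c < b)
    (hpos : ∀ x ∈ Ioo a c, 0 < g x) (hneg : ∀ x ∈ Ioo d b, g x < 0) : c ≤ d := by
  by_contra! hdc
  have hm_pos := hpos ((d + c) / 2) ⟨by linarith, by linarith⟩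
  have hm_neg := hneg ((d + c) / 2) ⟨by linarith, by linarith⟩
  linarith

theorem StrictAntiOn.existsUnique_sign_change {f g : ℝ → ℝ} {a b : ℝ} (hab : a ≤ b)
    (hf : StrictAntiOn f (Icc a b)) (hcont : ContinuousOn f (Icc a b)) (ha : 0 < f a)
    (hb : f b < 0) (hg : ∀ x ∈ Ioo a b, SignType.sign (g x) = SignType.sign (f x)) :
    ∃! c, c ∈ Ioo a b ∧ (∀ x ∈ Ioo a c, 0 < g x) ∧ ∀ x ∈ Ioo c b, g x < 0 := by
  obtain ⟨c, hc, hfc⟩ := intermediate_value_Ioo' hab hcont ⟨hb, ha⟩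
  have hpos : ∀ x ∈ Ioo a c, 0 < g x := fun x hx => by
    have hx' : x ∈ Ioo a b := ⟨hx.1, hx.2.trans hc.2⟩
    rw [← sign_eq_one_iff, hg x hx', sign_eq_one_iff, ← hfc]
    exact hf (Ioo_subset_Icc_self hx') (Ioo_subset_Icc_self hc) hx.2
  have hneg : ∀ x ∈ Ioo c b, g x < 0 := fun x hx => by
    have hx' : x ∈ Ioo a b := ⟨hc.1.trans hx.1, hx.2⟩
    rw [← sign_eq_neg_one_iff, hg x hx', sign_eq_neg_one_iff, ← hfc]
    exact hf (Ioo_subset_Icc_self hc) (Ioo_subset_Icc_self hx') hx.1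
  refine ⟨c, ⟨hc, hpos, hneg⟩, fun d ⟨hd, hd_pos, hd_neg⟩ => le_antisymm ?_ ?_⟩
  · exact le_of_pos_of_neg_on_Ioo hc.1 hd.2 hd_pos hneg
  · exact le_of_pos_of_neg_on_Ioo hd.1 hc.2 hpos hd_neg

namespace Eps1

noncomputable def eps1 (γ ρm ρp K L ρ : ℝ) : ℝ :=
  (ρp ^ γ - ρ ^ γ) / ρ - (ρp / ρ) * (L * √(1 - ρm / ρ) - K * √(ρp / ρ - 1)) ^ 2

noncomputable def signFactor (γ ρm ρp K L ρ : ℝ) : ℝ :=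
  √((ρp ^ γ - ρ ^ γ) / ρp) + K * √(ρp / ρ - 1) - L * √(1 - ρm / ρ)

noncomputable def posFactor (γ ρm ρp K L ρ : ℝ) : ℝ :=
  √((ρp ^ γ - ρ ^ γ) / ρp) - K * √(ρp / ρ - 1) + L * √(1 - ρm / ρ)

variable {γ ρm ρp K L ρ : ℝ}

theorem eps1_eq_mul (hγ : 0 ≤ γ) (hρ : 0 < ρ) (hρρp : ρ ≤ ρp) :
    eps1 γ ρm ρp K L ρ = ρp / ρ * (signFactor γ ρm ρp K L ρ * posFactor γ ρm ρp K L ρ) := by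
  have hS : √((ρp ^ γ - ρ ^ γ) / ρp) ^ 2 = (ρp ^ γ - ρ ^ γ) / ρp :=
    sq_sqrt (div_nonneg (sub_nonneg.2 (rpow_le_rpow hρ.le hρρp hγ)) (hρ.trans_le hρρp).le)
  have hfirst : (ρp ^ γ - ρ ^ γ) / ρ = ρp / ρ * √((ρp ^ γ - ρ ^ γ) / ρp) ^ 2 := by
    rw [hS]
    field_simp [(hρ.trans_le hρρp).ne']
  rw [eps1, signFactor, posFactor, hfirst]
  ring

theorem concaveOn_rpow_gap (hγ : 0 ≤ γ) :
    ConcaveOn ℝ (Ici 0) fun x => (ρp ^ γ - x ^ γ) * x - K ^ 2 * ρp * (ρp - x) := by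
  have hconv := convexOn_rpow (p := γ + 1) (by linarith)
  have hlin := (LinearMap.mulLeft ℝ (ρp ^ γ + K ^ 2 * ρp)).concaveOn (convex_Ici (0 : ℝ))
  refine ((hlin.sub hconv).add_const (-(K ^ 2 * ρp ^ 2))).congr fun x hx => ?_
  simp only [Pi.add_apply, Pi.sub_apply, LinearMap.mulLeft_apply,
    rpow_add_one' (mem_Ici.1 hx) (by linarith : γ + 1 ≠ 0)]
  ring

theorem sq_mul_lt_rpow_sub_mul (hγ : 0 ≤ γ) (hρm : 0 < ρm)
    (hinit : (ρp ^ γ - ρm ^ γ) / ρm - K ^ 2 * ρp * (ρp - ρm) / ρm ^ 2 > 0) (hρ : ρ ∈ Ioo ρm ρp) :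
    K ^ 2 * ρp * (ρp - ρ) < (ρp ^ γ - ρ ^ γ) * ρ := by
  have hgap_ρm : 0 < (ρp ^ γ - ρm ^ γ) * ρm - K ^ 2 * ρp * (ρp - ρm) := by
    have h := mul_pos (pow_pos hρm 2) hinit
    field_simp at h
    linarith
  have hgap_ρp : 0 ≤ (ρp ^ γ - ρp ^ γ) * ρp - K ^ 2 * ρp * (ρp - ρp) := by simp
  have := (concaveOn_rpow_gap hγ).pos_of_mem_Ico (mem_Ici.2 hρm.le)
    (mem_Ici.2 (hρm.trans (hρ.1.trans hρ.2)).le) hgap_ρm hgap_ρp (Ioo_subset_Ico_self hρ)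
  linarith

theorem posFactor_pos (hγ : 0 ≤ γ) (hρm : 0 < ρm)
    (hinit : (ρp ^ γ - ρm ^ γ) / ρm - K ^ 2 * ρp * (ρp - ρm) / ρm ^ 2 > 0) (hL : 0 ≤ L)
    (hρ : ρ ∈ Ioo ρm ρp) : 0 < posFactor γ ρm ρp K L ρ := by
  have hρ0 : 0 < ρ := hρm.trans hρ.1
  have hρp0 : 0 < ρp := hρ0.trans hρ.2
  have hKB : K * √(ρp / ρ - 1) < √((ρp ^ γ - ρ ^ γ) / ρp) := by
    apply lt_sqrt_of_sq_lt
    rw [mul_pow, sq_sqrt (sub_nonneg.2 ((one_le_div hρ0).2 hρ.2.le)), lt_div_iff₀ hρp0]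
    calc K ^ 2 * (ρp / ρ - 1) * ρp = K ^ 2 * ρp * (ρp - ρ) / ρ := by field_simp
      _ < (ρp ^ γ - ρ ^ γ) * ρ / ρ :=
          div_lt_div_of_pos_right (sq_mul_lt_rpow_sub_mul hγ hρm hinit hρ) hρ0
      _ = ρp ^ γ - ρ ^ γ := by field_simp
  have hLA := mul_nonneg hL (sqrt_nonneg (1 - ρm / ρ))
  rw [posFactor]
  linarith

theorem sign_eps1 (hγ : 0 ≤ γ) (hρm : 0 < ρm)
    (hinit : (ρp ^ γ - ρm ^ γ) / ρm - K ^ 2 * ρp * (ρp - ρm) / ρm ^ 2 > 0) (hL : 0 ≤ L)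
    (hρ : ρ ∈ Ioo ρm ρp) :
    SignType.sign (eps1 γ ρm ρp K L ρ) = SignType.sign (signFactor γ ρm ρp K L ρ) := by
  have hρ0 : 0 < ρ := hρm.trans hρ.1
  rw [eps1_eq_mul hγ hρ0 hρ.2.le, sign_mul, sign_mul, sign_pos (div_pos (hρ0.trans hρ.2) hρ0),
    sign_pos (posFactor_pos hγ hρm hinit hL hρ), one_mul, mul_one]

theorem signFactor_strictAntiOn (hγ : 0 < γ) (hρm : 0 < ρm) (hK : 0 ≤ K) (hL : 0 ≤ L) :
    StrictAntiOn (signFactor γ ρm ρp K L) (Icc ρm ρp) := by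
  intro x hx y hy hxy
  have hx0 : 0 < x := hρm.trans_le hx.1
  have hρp0 : 0 < ρp := hx0.trans (hxy.trans_le hy.2)
  have hS : √((ρp ^ γ - y ^ γ) / ρp) < √((ρp ^ γ - x ^ γ) / ρp) :=
    sqrt_lt_sqrt (div_nonneg (sub_nonneg.2 (rpow_le_rpow (hx0.trans hxy).le hy.2 hγ.le)) hρp0.le)
      (div_lt_div_of_pos_right (sub_lt_sub_left (rpow_lt_rpow hx0.le hxy hγ) _) hρp0)
  have hB : K * √(ρp / y - 1) ≤ K * √(ρp / x - 1) := by gcongr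
  have hA : L * √(1 - ρm / x) ≤ L * √(1 - ρm / y) := by gcongr
  simp only [signFactor]
  linarith

theorem continuousOn_signFactor (hρm : 0 < ρm) :
    ContinuousOn (signFactor γ ρm ρp K L) (Icc ρm ρp) := by
  have hne : ∀ x ∈ Icc ρm ρp, x ≠ 0 := fun x hx => (hρm.trans_le hx.1).ne'
  unfold signFactor
  fun_prop (disch := first | exact hne | (intro x hx; exact Or.inl (hne x hx)))

theorem signFactor_left_pos (hρm : 0 < ρm) (hρp : ρm < ρp) (hK : 0 < K) :
    0 < signFactor γ ρm ρp K L ρm := by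
  have hB : 0 < √(ρp / ρm - 1) := sqrt_pos.2 (sub_pos.2 ((one_lt_div hρm).2 hρp))
  simp only [signFactor, div_self hρm.ne', sub_self, sqrt_zero, mul_zero, sub_zero]
  exact add_pos_of_nonneg_of_pos (sqrt_nonneg _) (mul_pos hK hB)

theorem signFactor_right_neg (hρm : 0 < ρm) (hρp : ρm < ρp) (hL : 0 < L) :
    signFactor γ ρm ρp K L ρp < 0 := by
  have hρp0 : 0 < ρp := hρm.trans hρp
  have hA : 0 < √(1 - ρm / ρp) := sqrt_pos.2 (sub_pos.2 ((div_lt_one hρp0).2 hρp))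
  simp only [signFactor, sub_self, zero_div, div_self hρp0.ne', sqrt_zero, mul_zero, add_zero,
    zero_sub, neg_lt_zero]
  exact mul_pos hL hA

end Eps1

theorem eps1_unique_sign_change (γ ρm ρp K L : ℝ) (hγ : 1 < γ)
    (hρm : 0 < ρm) (hρp : ρm < ρp) (hK : 0 < K) (hL : 0 < L)
    (hinit : (ρp ^ γ - ρm ^ γ) / ρm - K ^ 2 * ρp * (ρp - ρm) / ρm ^ 2 > 0) :
    ∃! ρb : ℝ, ρb ∈ Set.Ioo ρm ρp ∧
      (∀ ρ₁ ∈ Set.Ioo ρm ρb,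
        (ρp ^ γ - ρ₁ ^ γ) / ρ₁ -
          (ρp / ρ₁) * (L * Real.sqrt (1 - ρm / ρ₁) - K * Real.sqrt (ρp / ρ₁ - 1)) ^ 2 > 0) ∧
      (∀ ρ₁ ∈ Set.Ioo ρb ρp,
        (ρp ^ γ - ρ₁ ^ γ) / ρ₁ -
          (ρp / ρ₁) * (L * Real.sqrt (1 - ρm / ρ₁) - K * Real.sqrt (ρp / ρ₁ - 1)) ^ 2 < 0) := by
  have hγ0 : 0 < γ := by linarith
  exact (Eps1.signFactor_strictAntiOn hγ0 hρm hK.le hL.le).existsUnique_sign_change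
    (g := Eps1.eps1 γ ρm ρp K L) hρp.le (Eps1.continuousOn_signFactor hρm)
    (Eps1.signFactor_left_pos hρm hρp hK) (Eps1.signFactor_right_neg hρm hρp hL)
    fun _ hρ => Eps1.sign_eps1 hγ0.le hρm hinit hL.le hρ
end

section
/- Let p(ρ) = ρ^γ with γ > 1, 0 < ρ₋ < ρ₊, R = ρ₋ − ρ₊ < 0, T = (ρ₊−ρ₋)(p(ρ₊)−p(ρ₋))/(ρ₊ρ₋). Define ε̄₁(ρ₁) = (p(ρ₊)−p(ρ₁))/ρ₁ − ρ₊ρ₋²(ρ₊−ρ₁)T/(ρ₁²R²) for ρ₁ ∈ [ρ₋, ρ₊]. Then ε̄₁(ρ₋) = 0, ε̄₁(ρ₊) = 0, and ε̄₁(ρ₁) > 0 for all ρ₁ ∈ (ρ₋, ρ₊). -/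
/-!
Factoring out `(ρ₊ - ρ₁) / ρ₁`, the quantity `ε̄₁(ρ₁)` becomes the slope of the chord of `p` over
`[ρ₁, ρ₊]` minus `ρ₋ / ρ₁` times the slope of the chord over `[ρ₋, ρ₊]`. By convexity of `p` the
first slope dominates the second, which is positive, and `ρ₋ / ρ₁ < 1` for `ρ₁ ∈ (ρ₋, ρ₊)`.
-/

open Real Set

/-- `ρm`, `ρp` stand for `ρ₋`, `ρ₊`, and `T` is written out. -/
noncomputable def eps1bar (p : ℝ → ℝ) (ρm ρp ρ₁ : ℝ) : ℝ :=
  (p ρp - p ρ₁) / ρ₁ -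
    ρp * ρm ^ 2 * (ρp - ρ₁) * ((ρp - ρm) * (p ρp - p ρm) / (ρp * ρm)) /
      (ρ₁ ^ 2 * (ρm - ρp) ^ 2)

section

variable (p : ℝ → ℝ) {ρm ρp ρ₁ : ℝ}

theorem eps1bar_right_eq_zero : eps1bar p ρm ρp ρp = 0 := by
  simp [eps1bar]

theorem eps1bar_left_eq_zero (hm : ρm ≠ 0) (hp : ρp ≠ 0) (hmp : ρm ≠ ρp) :
    eps1bar p ρm ρp ρm = 0 := by
  have : ρm - ρp ≠ 0 := sub_ne_zero.2 hmp
  unfold eps1bar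
  field_simp
  ring

theorem eps1bar_eq_mul_sub_slopes (h₁ : ρ₁ ≠ 0) (hp : ρp ≠ 0) (hmp : ρm ≠ ρp)
    (h₁p : ρ₁ ≠ ρp) :
    eps1bar p ρm ρp ρ₁ = (ρp - ρ₁) / ρ₁ *
      ((p ρp - p ρ₁) / (ρp - ρ₁) - ρm / ρ₁ * ((p ρp - p ρm) / (ρp - ρm))) := by
  have : ρp - ρ₁ ≠ 0 := sub_ne_zero.2 h₁p.symm
  unfold eps1bar
  field_simp
  ring

variable {p}

theorem eps1bar_pos {s : Set ℝ} (hconv : ConvexOn ℝ s p) (hms : ρm ∈ s) (hps : ρp ∈ s)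
    (hm : 0 < ρm) (h₁ : ρ₁ ∈ Ioo ρm ρp) (hmono : p ρm < p ρp) :
    0 < eps1bar p ρm ρp ρ₁ := by
  obtain ⟨hm₁, h₁p⟩ := h₁
  have h₁pos : 0 < ρ₁ := hm.trans hm₁
  rw [eps1bar_eq_mul_sub_slopes p h₁pos.ne' (hm.trans (hm₁.trans h₁p)).ne'
    (hm₁.trans h₁p).ne h₁p.ne]
  refine mul_pos (div_pos (sub_pos.2 h₁p) h₁pos) (sub_pos.2 ?_)
  have hslope_pos : 0 < (p ρp - p ρm) / (ρp - ρm) :=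
    div_pos (sub_pos.2 hmono) (sub_pos.2 (hm₁.trans h₁p))
  calc ρm / ρ₁ * ((p ρp - p ρm) / (ρp - ρm))
      < (p ρp - p ρm) / (ρp - ρm) :=
        mul_lt_of_lt_one_left hslope_pos ((div_lt_one h₁pos).2 hm₁)
    _ ≤ (p ρp - p ρ₁) / (ρp - ρ₁) := hconv.secant_mono_aux3 hms hps hm₁ h₁p

end

theorem eps1bar_sign (γ ρm ρp : ℝ) (hγ : 1 < γ) (hρm : 0 < ρm) (hρp : ρm < ρp) :
    (fun ρ₁ : ℝ => (ρp ^ γ - ρ₁ ^ γ) / ρ₁ -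
        ρp * ρm ^ 2 * (ρp - ρ₁) * ((ρp - ρm) * (ρp ^ γ - ρm ^ γ) / (ρp * ρm)) /
          (ρ₁ ^ 2 * (ρm - ρp) ^ 2)) ρm = 0 ∧
    (fun ρ₁ : ℝ => (ρp ^ γ - ρ₁ ^ γ) / ρ₁ -
        ρp * ρm ^ 2 * (ρp - ρ₁) * ((ρp - ρm) * (ρp ^ γ - ρm ^ γ) / (ρp * ρm)) /
          (ρ₁ ^ 2 * (ρm - ρp) ^ 2)) ρp = 0 ∧
    ∀ ρ₁ ∈ Set.Ioo ρm ρp,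
      (ρp ^ γ - ρ₁ ^ γ) / ρ₁ -
        ρp * ρm ^ 2 * (ρp - ρ₁) * ((ρp - ρm) * (ρp ^ γ - ρm ^ γ) / (ρp * ρm)) /
          (ρ₁ ^ 2 * (ρm - ρp) ^ 2) > 0 := by
  have hρp₀ : 0 < ρp := hρm.trans hρp
  have hconv : ConvexOn ℝ (Ici 0) (fun ρ : ℝ => ρ ^ γ) := convexOn_rpow hγ.le
  have hmono : ρm ^ γ < ρp ^ γ := rpow_lt_rpow hρm.le hρp (zero_lt_one.trans hγ)
  exact ⟨eps1bar_left_eq_zero (· ^ γ) hρm.ne' hρp₀.ne' hρp.ne, eps1bar_right_eq_zero (· ^ γ),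
    fun ρ₁ h₁ => eps1bar_pos hconv hρm.le hρp₀.le hρm h₁ hmono⟩
end

section
/- Let p(ρ)=ρ^γ with γ>1, ε(ρ)=ρ^(γ−1)/(γ−1), 0<ρ₋<ρ₊, R=ρ₋−ρ₊, T=(ρ₊−ρ₋)(p(ρ₊)−p(ρ₋))/(ρ₊ρ₋), v₊₂∈ℝ. Define P(r,s)=p(r)+p(s)−2rs(ε(r)−ε(s))/(r−s), ε̄₁(ρ₁)=(p(ρ₊)−p(ρ₁))/ρ₁ − ρ₊ρ₋²(ρ₊−ρ₁)T/(ρ₁²R²), M̄₁(ρ₁) = ((ρ₁−ρ₋)/(ρ₁ρ₋))P(ρ₋,ρ₁) − (ε̄₁(ρ₁)ρ₁/(ρ₋ρ₊))(2ρ₋ − ρ₊ + 2Rv₊₂/√T), and M̄₂(ρ₁) = −((ρ₊−ρ₁)/(ρ₊ρ₁))P(ρ₁,ρ₊) − (ε̄₁(ρ₁)ρ₁/(ρ₋ρ₊))(ρ₋ + 2Rv₊₂/√T). Then M̄₁(ρ₁) > M̄₂(ρ₁) for every ρ₁ ∈ (ρ₋, ρ₊). -/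
open Real

noncomputable def Ppress (γ r s : ℝ) : ℝ :=
  r ^ γ + s ^ γ - 2 * r * s * ((r ^ (γ - 1) / (γ - 1) - s ^ (γ - 1) / (γ - 1)) / (r - s))

noncomputable def Tconst (γ ρm ρp : ℝ) : ℝ :=
  (ρp - ρm) * (ρp ^ γ - ρm ^ γ) / (ρp * ρm)

noncomputable def epsBar (γ ρm ρp ρ₁ : ℝ) : ℝ :=
  (ρp ^ γ - ρ₁ ^ γ) / ρ₁ -
    ρp * ρm ^ 2 * (ρp - ρ₁) * Tconst γ ρm ρp / (ρ₁ ^ 2 * (ρm - ρp) ^ 2)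

noncomputable def Mbar1 (γ ρm ρp vp2 ρ₁ : ℝ) : ℝ :=
  ((ρ₁ - ρm) / (ρ₁ * ρm)) * Ppress γ ρm ρ₁ -
    (epsBar γ ρm ρp ρ₁ * ρ₁ / (ρm * ρp)) *
      (2 * ρm - ρp + 2 * (ρm - ρp) * vp2 / Real.sqrt (Tconst γ ρm ρp))

noncomputable def Mbar2 (γ ρm ρp vp2 ρ₁ : ℝ) : ℝ :=
  -((ρp - ρ₁) / (ρp * ρ₁)) * Ppress γ ρ₁ ρp -
    (epsBar γ ρm ρp ρ₁ * ρ₁ / (ρm * ρp)) *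
      (ρm + 2 * (ρm - ρp) * vp2 / Real.sqrt (Tconst γ ρm ρp))

/-! The difference `Mbar1 - Mbar2` does not depend on `vp2`: it is a nonnegative combination of
`Ppress γ ρm ρ₁` and `Ppress γ ρ₁ ρp` plus `epsBar γ ρm ρp ρ₁ * ρ₁ * (ρp - ρm) / (ρm * ρp)`.
After clearing denominators, `Ppress γ s r ≥ 0` for `0 < s < r` says that
`f x = (γ - 1)(x - s)(x^γ + s^γ) - 2s x^γ + 2s^γ x` satisfies `f s ≤ f r`; by Young's inequality
`f' ≥ 0` on `[s, ∞)`. Writing `σ` and `τ` for the slopes of the chords of `x ↦ x^γ` over `[ρm, ρp]`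
and `[ρ₁, ρp]`, one has `epsBar γ ρm ρp ρ₁ = (ρp - ρ₁) / ρ₁² * (ρ₁ τ - ρm σ)`, which is positive
because `0 < σ ≤ τ` by convexity and `ρm < ρ₁`. -/

open Set

lemma self_mul_rpow_sub_one {x : ℝ} (hx : 0 < x) (γ : ℝ) : x * x ^ (γ - 1) = x ^ γ := by
  rw [rpow_sub_one hx.ne', mul_div_cancel₀ _ hx.ne']

lemma mul_mul_rpow_sub_one_le {γ s x : ℝ} (hγ : 1 < γ) (hs : 0 ≤ s) (hx : 0 ≤ x) :
    γ * s * x ^ (γ - 1) ≤ (γ - 1) * x ^ γ + s ^ γ := by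
  have young := young_inequality_of_nonneg hs (rpow_nonneg hx (γ - 1))
    (HolderConjugate.conjExponent hγ)
  have hγ₁ : γ - 1 ≠ 0 := by linarith
  rw [← rpow_mul hx, conjExponent, mul_div_cancel₀ _ hγ₁, div_div_eq_mul_div, ← add_div, le_div_iff₀ (by linarith)] at young
  linarith

lemma two_mul_mul_rpow_sub_rpow_le {γ s r : ℝ} (hγ : 1 < γ) (hs : 0 < s) (hr : s ≤ r) :
    2 * r * s * (r ^ (γ - 1) - s ^ (γ - 1)) ≤ (γ - 1) * (r - s) * (r ^ γ + s ^ γ) := by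
  let f : ℝ → ℝ := fun x ↦ (γ - 1) * (x - s) * (x ^ γ + s ^ γ) - 2 * s * x ^ γ + 2 * s ^ γ * x
  have hf : ∀ x ∈ Ici s, HasDerivAt f
      ((γ + 1) * ((γ - 1) * x ^ γ + s ^ γ - γ * s * x ^ (γ - 1))) x := by
    intro x hx
    have hx₀ : 0 < x := hs.trans_le hx
    have hpow := hasDerivAt_rpow_const (p := γ) (Or.inl hx₀.ne')
    refine ((((hasDerivAt_id x).sub_const s).const_mul (γ - 1)).mul (hpow.add_const (s ^ γ))).sub
      (hpow.const_mul (2 * s)) |>.add ((hasDerivAt_id x).const_mul (2 * s ^ γ)) |>.congr_deriv ?_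
    rw [← self_mul_rpow_sub_one hx₀]
    simp only [id]
    ring
  have hmono : MonotoneOn f (Ici s) := by
    refine monotoneOn_of_hasDerivWithinAt_nonneg (convex_Ici s)
      (fun x hx ↦ (hf x hx).continuousAt.continuousWithinAt)
      (fun x hx ↦ (hf x (interior_subset hx)).hasDerivWithinAt) fun x hx ↦ ?_
    rw [interior_Ici] at hx
    have := mul_mul_rpow_sub_one_le hγ hs.le (hs.trans hx).le
    have : 0 < γ + 1 := by linarith
    nlinarith
  have hfsr := hmono self_mem_Ici hr hr
  simp only [f, sub_self, mul_zero, zero_mul, zero_sub] at hfsr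
  have hlhs : 2 * r * s * (r ^ (γ - 1) - s ^ (γ - 1)) = 2 * s * r ^ γ - 2 * r * s ^ γ := by
    rw [← self_mul_rpow_sub_one (hs.trans_le hr) γ, ← self_mul_rpow_sub_one hs γ]
    ring
  linarith

lemma Ppress_nonneg {γ s r : ℝ} (hγ : 1 < γ) (hs : 0 < s) (hr : s < r) : 0 ≤ Ppress γ s r := by
  have hγ₁ : 0 < γ - 1 := by linarith
  have hrs : 0 < r - s := by linarith
  have hquot : (s ^ (γ - 1) / (γ - 1) - r ^ (γ - 1) / (γ - 1)) / (s - r) =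
      (r ^ (γ - 1) - s ^ (γ - 1)) / ((γ - 1) * (r - s)) := by
    rw [← neg_sub r s]
    field_simp
    ring
  have := two_mul_mul_rpow_sub_rpow_le hγ hs hr.le
  rw [Ppress, hquot, sub_nonneg, mul_div_assoc', div_le_iff₀ (by positivity)]
  linarith

lemma epsBar_pos {γ ρm ρp ρ₁ : ℝ} (hγ : 1 < γ) (hρm : 0 < ρm) (h₁ : ρm < ρ₁) (h₂ : ρ₁ < ρp) :
    0 < epsBar γ ρm ρp ρ₁ := by
  have hρ₁ : 0 < ρ₁ := hρm.trans h₁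
  have hρp : 0 < ρp := hρ₁.trans h₂
  have hρp₁ : 0 < ρp - ρ₁ := by linarith
  have hρpm : 0 < ρp - ρm := by linarith
  have hform : epsBar γ ρm ρp ρ₁ = (ρp - ρ₁) / ρ₁ ^ 2 *
      (ρ₁ * ((ρp ^ γ - ρ₁ ^ γ) / (ρp - ρ₁)) - ρm * ((ρp ^ γ - ρm ^ γ) / (ρp - ρm))) := by
    rw [epsBar, Tconst, ← neg_sub ρp ρm]
    field_simp
  have hσ : 0 < (ρp ^ γ - ρm ^ γ) / (ρp - ρm) :=
    div_pos (sub_pos.2 (rpow_lt_rpow hρm.le (h₁.trans h₂) (by linarith))) hρpm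
  have hστ : (ρp ^ γ - ρm ^ γ) / (ρp - ρm) ≤ (ρp ^ γ - ρ₁ ^ γ) / (ρp - ρ₁) := by
    have := (convexOn_rpow hγ.le).secant_mono (mem_Ici.2 hρp.le) (mem_Ici.2 hρm.le)
      (mem_Ici.2 hρ₁.le) (by linarith) h₂.ne h₁.le
    rwa [← neg_div_neg_eq, neg_sub, neg_sub, ← neg_div_neg_eq (ρ₁ ^ γ - _), neg_sub, neg_sub] at this
  rw [hform]
  refine mul_pos (by positivity) (sub_pos.2 ?_)
  calc ρm * ((ρp ^ γ - ρm ^ γ) / (ρp - ρm)) < ρ₁ * ((ρp ^ γ - ρm ^ γ) / (ρp - ρm)) := by gcongr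
    _ ≤ ρ₁ * ((ρp ^ γ - ρ₁ ^ γ) / (ρp - ρ₁)) := by gcongr

lemma Mbar1_sub_Mbar2 (γ ρm ρp v ρ₁ : ℝ) :
    Mbar1 γ ρm ρp v ρ₁ - Mbar2 γ ρm ρp v ρ₁ =
      (ρ₁ - ρm) / (ρ₁ * ρm) * Ppress γ ρm ρ₁ + (ρp - ρ₁) / (ρp * ρ₁) * Ppress γ ρ₁ ρp +
        epsBar γ ρm ρp ρ₁ * ρ₁ / (ρm * ρp) * (ρp - ρm) := by
  unfold Mbar1 Mbar2
  ring

theorem Mbar1_gt_Mbar2_general (γ ρm ρp vp2 : ℝ) (hγ : 1 < γ) (hρm : 0 < ρm) :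
    ∀ ρ₁ ∈ Set.Ioo ρm ρp, Mbar1 γ ρm ρp vp2 ρ₁ > Mbar2 γ ρm ρp vp2 ρ₁ := by
  rintro ρ₁ ⟨h₁, h₂⟩
  have hρ₁ : 0 < ρ₁ := hρm.trans h₁
  have hρp : 0 < ρp := hρ₁.trans h₂
  rw [gt_iff_lt, ← sub_pos, Mbar1_sub_Mbar2]
  refine add_pos_of_nonneg_of_pos (add_nonneg ?_ ?_) (mul_pos ?_ (by linarith))
  · exact mul_nonneg (div_nonneg (by linarith) (by positivity)) (Ppress_nonneg hγ hρm h₁)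
  · exact mul_nonneg (div_nonneg (by linarith) (by positivity)) (Ppress_nonneg hγ hρ₁ h₂)
  · have := epsBar_pos hγ hρm h₁ h₂
    positivity

theorem Mbar1_gt_Mbar2 (γ ρm ρp vp2 : ℝ) (hγ : 1 < γ) (hρm : 0 < ρm) (hρp : ρm < ρp) :
    ∀ ρ₁ ∈ Set.Ioo ρm ρp, Mbar1 γ ρm ρp vp2 ρ₁ > Mbar2 γ ρm ρp vp2 ρ₁ :=
  Mbar1_gt_Mbar2_general γ ρm ρp vp2 hγ hρm
end

section
/- With the notation of the previous statement, M̄₁(ρ₊) = ((ρ₊−ρ₋)/(ρ₊ρ₋))·P(ρ₋,ρ₊) > 0; consequently there exists s ∈ (ρ₋, ρ₊) with M̄₁(s) > ((ρ₊−ρ₋)/(2ρ₊ρ₋))·P(ρ₋,ρ₊) > 0. -/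
/-!
At `ρ₁ = ρ₊` the factor `ε̄₁` vanishes, so `M̄₁(ρ₊)` reduces to its pressure term, which is positive
because `P(r, s) > 0` for `0 < r < s`. Multiplied by `(γ - 1)(s - r)`, the latter says that
`F(s) = (γ-1)(s-r)(r^γ + s^γ) - 2 r s^γ + 2 r^γ s` is positive; `F` and `F'` vanish at `r` and
`F''(x) = (γ-1)γ(γ+1) x^(γ-2) (x - r) > 0` for `x > r`. Continuity of `M̄₁` at `ρ₊` then gives the
point `s` to the left of `ρ₊` where `M̄₁` still exceeds half its value at `ρ₊`.
-/

open Real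

open Set

theorem pos_of_eq_zero_of_hasDerivAt_pos {f f' : ℝ → ℝ} {a : ℝ}
    (hf : ∀ x ∈ Ici a, HasDerivAt f (f' x) x) (ha : f a = 0) (hf' : ∀ x ∈ Ioi a, 0 < f' x) :
    ∀ x ∈ Ioi a, 0 < f x := by
  have hmono : StrictMonoOn f (Ici a) := by
    refine strictMonoOn_of_hasDerivWithinAt_pos (f' := f') (convex_Ici a)
      (fun x hx => (hf x hx).continuousAt.continuousWithinAt) (fun x hx => ?_) ?_
    · rw [interior_Ici] at hx ⊢
      exact (hf x (mem_Ici_of_Ioi hx)).hasDerivWithinAt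
    · simpa only [interior_Ici] using hf'
  intro x hx
  simpa only [ha] using hmono self_mem_Ici (mem_Ici_of_Ioi hx) hx

theorem exists_mem_Ioo_lt_of_continuousAt {f : ℝ → ℝ} {a b c : ℝ} (hab : a < b)
    (hf : ContinuousAt f b) (hc : c < f b) : ∃ s ∈ Ioo a b, c < f s := by
  have hnear : ∀ᶠ x in nhdsWithin b (Iio b), c < f x :=
    (hf.eventually (lt_mem_nhds hc)).filter_mono nhdsWithin_le_nhds
  obtain ⟨s, hs, hlt⟩ := (hnear.and (Ioo_mem_nhdsLT hab)).exists
  exact ⟨s, hlt, hs⟩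

section Pressure

variable {γ r s : ℝ}

theorem Ppress_numerator_pos (hγ : 1 < γ) (hr : 0 < r) (hrs : r < s) :
    0 < (γ - 1) * (s - r) * (r ^ γ + s ^ γ) - 2 * r * s ^ γ + 2 * r ^ γ * s := by
  have hpos : ∀ x ∈ Ici r, x ≠ 0 := fun x hx => (hr.trans_le hx).ne'
  have hF : ∀ x ∈ Ici r, HasDerivAt
      (fun x => (γ - 1) * (x - r) * (r ^ γ + x ^ γ) - 2 * r * x ^ γ + 2 * r ^ γ * x)
      ((γ - 1) * ((x - r) * (γ * x ^ (γ - 1)) + (r ^ γ + x ^ γ)) - 2 * r * (γ * x ^ (γ - 1))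
        + 2 * r ^ γ) x := by
    intro x hx
    have hp := Real.hasDerivAt_rpow_const (p := γ) (Or.inl (hpos x hx))
    refine ((((hasDerivAt_id x).sub_const r).const_mul (γ - 1)).mul
      (hp.const_add (r ^ γ))).sub (hp.const_mul (2 * r)) |>.add
      ((hasDerivAt_id x).const_mul (2 * r ^ γ)) |>.congr_deriv ?_
    simp only [id_eq]
    ring
  have hG : ∀ x ∈ Ici r, HasDerivAt
      (fun x => (γ - 1) * ((x - r) * (γ * x ^ (γ - 1)) + (r ^ γ + x ^ γ))
        - 2 * r * (γ * x ^ (γ - 1)) + 2 * r ^ γ)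
      ((γ - 1) * γ * (γ + 1) * x ^ (γ - 2) * (x - r)) x := by
    intro x hx
    have hx0 := hpos x hx
    have hp := Real.hasDerivAt_rpow_const (p := γ - 1) (Or.inl hx0)
    have hp' := Real.hasDerivAt_rpow_const (p := γ) (Or.inl hx0)
    refine (((((hasDerivAt_id x).sub_const r).mul (hp.const_mul γ)).add
      (hp'.const_add (r ^ γ))).const_mul (γ - 1)).sub ((hp.const_mul γ).const_mul (2 * r))
      |>.add_const (2 * r ^ γ) |>.congr_deriv ?_
    rw [show γ - 1 - 1 = γ - 2 by ring, show γ - 1 = γ - 2 + 1 by ring, rpow_add_one hx0]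
    simp only [id_eq]
    ring
  have hGr : (γ - 1) * ((r - r) * (γ * r ^ (γ - 1)) + (r ^ γ + r ^ γ))
      - 2 * r * (γ * r ^ (γ - 1)) + 2 * r ^ γ = 0 := by
    rw [rpow_sub_one hr.ne']
    field_simp
    ring
  have hG'pos : ∀ x ∈ Ioi r, 0 < (γ - 1) * γ * (γ + 1) * x ^ (γ - 2) * (x - r) := by
    intro x (hx : r < x)
    have := rpow_pos_of_pos (hr.trans hx) (γ - 2)
    have := sub_pos.2 hx
    have := sub_pos.2 hγ
    positivity
  refine pos_of_eq_zero_of_hasDerivAt_pos hF (by ring) ?_ s hrs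
  exact pos_of_eq_zero_of_hasDerivAt_pos hG hGr hG'pos

theorem Ppress_eq_div (hγ : γ ≠ 1) (hr : r ≠ 0) (hs : s ≠ 0) (hrs : r ≠ s) :
    Ppress γ r s = ((γ - 1) * (s - r) * (r ^ γ + s ^ γ) - 2 * r * s ^ γ + 2 * r ^ γ * s)
      / ((γ - 1) * (s - r)) := by
  have hγ1 : γ - 1 ≠ 0 := sub_ne_zero.2 hγ
  have hsr : s - r ≠ 0 := sub_ne_zero.2 hrs.symm
  have hrs' : r - s ≠ 0 := sub_ne_zero.2 hrs
  rw [Ppress, rpow_sub_one hr, rpow_sub_one hs]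
  field_simp
  ring

theorem Ppress_pos (hγ : 1 < γ) (hr : 0 < r) (hrs : r < s) : 0 < Ppress γ r s := by
  rw [Ppress_eq_div hγ.ne' hr.ne' (hr.trans hrs).ne' hrs.ne]
  exact div_pos (Ppress_numerator_pos hγ hr hrs) (mul_pos (sub_pos.2 hγ) (sub_pos.2 hrs))

end Pressure

section Mbar1

variable {γ ρm ρp vp2 ρ₁ : ℝ}

@[simp]
theorem epsBar_self : epsBar γ ρm ρp ρp = 0 := by
  simp [epsBar]

theorem Mbar1_self : Mbar1 γ ρm ρp vp2 ρp = ((ρp - ρm) / (ρp * ρm)) * Ppress γ ρm ρp := by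
  simp [Mbar1]

theorem Mbar1_continuousAt (hρ₁ : ρ₁ ≠ 0) (hρm : ρm ≠ 0) (hρ₁m : ρ₁ ≠ ρm) (hmp : ρm ≠ ρp) :
    ContinuousAt (Mbar1 γ ρm ρp vp2) ρ₁ := by
  have hm₁ : ρm - ρ₁ ≠ 0 := sub_ne_zero.2 hρ₁m.symm
  have hmp' : ρm - ρp ≠ 0 := sub_ne_zero.2 hmp
  unfold Mbar1 epsBar Ppress
  fun_prop (disch := first | assumption | (left; assumption) | positivity)

end Mbar1

theorem Mbar1_at_rho_plus_pos (γ ρm ρp vp2 : ℝ) (hγ : 1 < γ) (hρm : 0 < ρm) (hρp : ρm < ρp) :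
    (Mbar1 γ ρm ρp vp2 ρp = ((ρp - ρm) / (ρp * ρm)) * Ppress γ ρm ρp ∧
      Mbar1 γ ρm ρp vp2 ρp > 0) ∧
    ∃ s ∈ Set.Ioo ρm ρp,
      Mbar1 γ ρm ρp vp2 s > ((ρp - ρm) / (2 * ρp * ρm)) * Ppress γ ρm ρp ∧
      ((ρp - ρm) / (2 * ρp * ρm)) * Ppress γ ρm ρp > 0 := by
  have hρp0 : 0 < ρp := hρm.trans hρp
  have hpos : 0 < Mbar1 γ ρm ρp vp2 ρp := by
    rw [Mbar1_self]
    exact mul_pos (div_pos (sub_pos.2 hρp) (mul_pos hρp0 hρm)) (Ppress_pos hγ hρm hρp)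
  have hhalf : ((ρp - ρm) / (2 * ρp * ρm)) * Ppress γ ρm ρp = Mbar1 γ ρm ρp vp2 ρp / 2 := by
    rw [Mbar1_self]
    ring
  have hcont : ContinuousAt (Mbar1 γ ρm ρp vp2) ρp :=
    Mbar1_continuousAt hρp0.ne' hρm.ne' hρp.ne' hρp.ne
  obtain ⟨s, hs, hlt⟩ := exists_mem_Ioo_lt_of_continuousAt hρp hcont (half_lt_self hpos)
  rw [hhalf]
  exact ⟨⟨Mbar1_self, hpos⟩, s, hs, hlt, half_pos hpos⟩
end

section
/- Let p(ρ) = ρ^γ with γ > 1, 0 < ρ₊ < ρ₋ (case R > 0), K, L > 0, and define ε₁(ρ₁) = (p(ρ₋) − p(ρ₁))/ρ₁ − (ρ₋/ρ₁)(L√(1 − ρ₊/ρ₁) − K√(ρ₋/ρ₁ − 1))² for ρ₁ ∈ (ρ₊, ρ₋). If (p(ρ₋)−p(ρ₊))/ρ₊ − K²ρ₋(ρ₋−ρ₊)/ρ₊² > 0 then there exists a unique ρ̄ ∈ (ρ₊, ρ₋) such that ε₁ > 0 on (ρ₊, ρ̄) and ε₁ < 0 on (ρ̄, ρ₋). -/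
/-!
Put `A = √((ρ₋^γ - ρ^γ) / ρ₋)`, `u = √(1 - ρ₊/ρ)` and `v = √(ρ₋/ρ - 1)`. Then
`ε₁ = (ρ₋/ρ) (A² - (L u - K v)²) = (ρ₋/ρ) (A + L u - K v) (A - L u + K v)`.
The factor `A - L u + K v` is continuous and strictly decreasing on `[ρ₊, ρ₋]`, positive at `ρ₊`
and negative at `ρ₋`, so it changes sign exactly once. The cofactor `A + L u - K v` is positive:
`L u > 0`, and `K v ≤ A` amounts to `K² ρ₋ (ρ₋ - ρ) ≤ ρ (ρ₋^γ - ρ^γ)`, which holds at `ρ₊` by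
hypothesis, with equality at `ρ₋`, and in between because `ρ ↦ ρ ρ₋^γ - ρ^(γ+1)` is concave.
-/

open Set

theorem le_of_pos_on_Ioo_of_neg_on_Ioo {α β : Type*} [LinearOrder α] [DenselyOrdered α]
    [Preorder β] [Zero β] {f : α → β} {a b c c' : α} (ha : a ≤ c) (hb : c' ≤ b)
    (hpos : ∀ x ∈ Ioo a c', 0 < f x) (hneg : ∀ x ∈ Ioo c b, f x < 0) : c' ≤ c := by
  by_contra! h
  obtain ⟨x, hcx, hxc'⟩ := exists_between h
  exact lt_asymm (hneg x ⟨hcx, hxc'.trans_le hb⟩) (hpos x ⟨ha.trans_lt hcx, hxc'⟩)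

theorem StrictAntiOn.exists_pos_neg_Ioo {α δ : Type*} [ConditionallyCompleteLinearOrder α]
    [DenselyOrdered α] [TopologicalSpace α] [OrderTopology α] [LinearOrder δ] [Zero δ]
    [TopologicalSpace δ] [OrderClosedTopology δ] {f : α → δ} {a b : α} (hab : a ≤ b)
    (hf : StrictAntiOn f (Icc a b)) (hcont : ContinuousOn f (Icc a b)) (ha : 0 < f a)
    (hb : f b < 0) : ∃ c ∈ Ioo a b, (∀ x ∈ Ioo a c, 0 < f x) ∧ ∀ x ∈ Ioo c b, f x < 0 := by
  obtain ⟨c, hc, hfc⟩ := intermediate_value_Ioo' hab hcont ⟨hb, ha⟩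
  have hcI : c ∈ Icc a b := Ioo_subset_Icc_self hc
  exact ⟨c, hc, fun x hx => hfc ▸ hf ⟨hx.1.le, hx.2.le.trans hcI.2⟩ hcI hx.2,
    fun x hx => hfc ▸ hf hcI ⟨hcI.1.trans hx.1.le, hx.2.le⟩ hx.1⟩

theorem concaveOn_mul_sub_rpow {γ : ℝ} (hγ : 0 ≤ γ) (a : ℝ) :
    ConcaveOn ℝ (Ici 0) fun x : ℝ => x * (a - x ^ γ) := by
  have hlin : ConcaveOn ℝ (Ici 0) fun x : ℝ => a * x :=
    (LinearMap.mul ℝ ℝ a).concaveOn (convex_Ici 0)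
  refine (hlin.sub (convexOn_rpow (by linarith : 1 ≤ γ + 1))).congr fun x (hx : 0 ≤ x) => ?_
  simp only [Pi.sub_apply, Real.rpow_add_one' hx (by linarith : γ + 1 ≠ 0)]
  ring

theorem mul_sub_le_mul_rpow_sub {γ k m a x : ℝ} (hγ : 0 ≤ γ) (ha : 0 ≤ a)
    (hx : x ∈ Icc a m) (hkm : k * (m - a) ≤ a * (m ^ γ - a ^ γ)) :
    k * (m - x) ≤ x * (m ^ γ - x ^ γ) := by
  have ham : a ≤ m := hx.1.trans hx.2
  have hmin := ((concaveOn_mul_sub_rpow hγ (m ^ γ + k)).add_const (-(k * m))).ge_on_segment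
    (mem_Ici.2 ha) (mem_Ici.2 (ha.trans ham)) ((segment_eq_Icc ham).symm ▸ hx)
  have hm : m * (m ^ γ + k - m ^ γ) + -(k * m) = 0 := by ring
  simp only [Pi.add_apply] at hmin
  rw [hm, min_le_iff] at hmin
  rcases hmin with h | h <;> nlinarith

noncomputable def eps1 (γ ρm ρp K L ρ : ℝ) : ℝ :=
  (ρm ^ γ - ρ ^ γ) / ρ - (ρm / ρ) * (L * √(1 - ρp / ρ) - K * √(ρm / ρ - 1)) ^ 2

noncomputable def eps1Factor (γ ρm ρp K L ρ : ℝ) : ℝ :=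
  √((ρm ^ γ - ρ ^ γ) / ρm) - L * √(1 - ρp / ρ) + K * √(ρm / ρ - 1)

noncomputable def eps1Cofactor (γ ρm ρp K L ρ : ℝ) : ℝ :=
  √((ρm ^ γ - ρ ^ γ) / ρm) + L * √(1 - ρp / ρ) - K * √(ρm / ρ - 1)

section

variable {γ ρm ρp K L ρ : ℝ}

theorem eps1_eq_mul (hγ : 0 ≤ γ) (hρ : 0 < ρ) (hρm : ρ ≤ ρm) :
    eps1 γ ρm ρp K L ρ = ρm / ρ * eps1Cofactor γ ρm ρp K L ρ * eps1Factor γ ρm ρp K L ρ := by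
  have hA : √((ρm ^ γ - ρ ^ γ) / ρm) ^ 2 = (ρm ^ γ - ρ ^ γ) / ρm :=
    Real.sq_sqrt (div_nonneg (sub_nonneg.2 (Real.rpow_le_rpow hρ.le hρm hγ))
      (hρ.le.trans hρm))
  have hρm0 : ρm ≠ 0 := (hρ.trans_le hρm).ne'
  calc eps1 γ ρm ρp K L ρ
      = ρm / ρ * (√((ρm ^ γ - ρ ^ γ) / ρm) ^ 2
          - (L * √(1 - ρp / ρ) - K * √(ρm / ρ - 1)) ^ 2) := by
        rw [hA, eps1]; field_simp
    _ = _ := by rw [eps1Cofactor, eps1Factor]; ring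

theorem eps1Factor_strictAntiOn (hγ : 0 < γ) (hρp : 0 < ρp) (hK : 0 ≤ K) (hL : 0 ≤ L) :
    StrictAntiOn (eps1Factor γ ρm ρp K L) (Icc ρp ρm) := by
  intro a ha b hb hab
  have ha0 : 0 < a := hρp.trans_le ha.1
  have hρm : 0 < ρm := ha0.trans_le ha.2
  have hA : √((ρm ^ γ - b ^ γ) / ρm) < √((ρm ^ γ - a ^ γ) / ρm) := by
    refine Real.sqrt_lt_sqrt ?_ ?_
    · exact div_nonneg (sub_nonneg.2 (Real.rpow_le_rpow (ha0.trans hab).le hb.2 hγ.le)) hρm.le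
    · gcongr
  have hu : L * √(1 - ρp / a) ≤ L * √(1 - ρp / b) := by gcongr
  have hv : K * √(ρm / b - 1) ≤ K * √(ρm / a - 1) := by gcongr
  simp only [eps1Factor]
  linarith

theorem eps1Factor_continuousOn : ContinuousOn (eps1Factor γ ρm ρp K L) (Ioi 0) := by
  have hρ : ∀ x ∈ Ioi (0 : ℝ), x ≠ 0 := fun x hx => ne_of_gt hx
  unfold eps1Factor
  fun_prop (disch := assumption)

theorem eps1Factor_left_pos (hγ : 0 < γ) (hρp : 0 < ρp) (hρm : ρp < ρm) (hK : 0 ≤ K) :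
    0 < eps1Factor γ ρm ρp K L ρp := by
  have hA : 0 < √((ρm ^ γ - ρp ^ γ) / ρm) :=
    Real.sqrt_pos.2 (div_pos (sub_pos.2 (Real.rpow_lt_rpow hρp.le hρm hγ)) (hρp.trans hρm))
  rw [eps1Factor, div_self hρp.ne', sub_self, Real.sqrt_zero, mul_zero, sub_zero]
  positivity

theorem eps1Factor_right_neg (hρp : 0 < ρp) (hρm : ρp < ρm) (hL : 0 < L) :
    eps1Factor γ ρm ρp K L ρm < 0 := by
  have hu : 0 < √(1 - ρp / ρm) :=
    Real.sqrt_pos.2 (sub_pos.2 ((div_lt_one (hρp.trans hρm)).2 hρm))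
  rw [eps1Factor, div_self (hρp.trans hρm).ne', sub_self, sub_self, zero_div, Real.sqrt_zero]
  linarith [mul_pos hL hu]

theorem eps1Cofactor_pos (hK : 0 ≤ K) (hL : 0 < L) (hρ : 0 < ρ) (hρp : ρp < ρ) (hρm : ρ ≤ ρm)
    (hkey : K ^ 2 * ρm * (ρm - ρ) ≤ ρ * (ρm ^ γ - ρ ^ γ)) :
    0 < eps1Cofactor γ ρm ρp K L ρ := by
  have hu : 0 < L * √(1 - ρp / ρ) :=
    mul_pos hL (Real.sqrt_pos.2 (sub_pos.2 ((div_lt_one hρ).2 hρp)))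
  have hv : K * √(ρm / ρ - 1) ≤ √((ρm ^ γ - ρ ^ γ) / ρm) := by
    rw [← Real.sqrt_sq hK, ← Real.sqrt_mul (sq_nonneg K)]
    refine Real.sqrt_le_sqrt ?_
    rw [div_sub_one hρ.ne', mul_div_assoc', div_le_div_iff₀ hρ (hρ.trans_le hρm)]
    linarith
  rw [eps1Cofactor]
  linarith

theorem exists_pos_eps1_eq_mul_eps1Factor (hγ : 0 ≤ γ) (hK : 0 ≤ K) (hL : 0 < L) (hρp : 0 < ρp)
    (hρ : ρ ∈ Ioo ρp ρm) (hkey : K ^ 2 * ρm * (ρm - ρp) ≤ ρp * (ρm ^ γ - ρp ^ γ)) :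
    ∃ s > 0, eps1 γ ρm ρp K L ρ = s * eps1Factor γ ρm ρp K L ρ := by
  have hρ0 : 0 < ρ := hρp.trans hρ.1
  have hcof := eps1Cofactor_pos hK hL hρ0 hρ.1 hρ.2.le
    (mul_sub_le_mul_rpow_sub hγ hρp.le (Ioo_subset_Icc_self hρ) hkey)
  exact ⟨_, mul_pos (div_pos (hρ0.trans hρ.2) hρ0) hcof, eps1_eq_mul hγ hρ0 hρ.2.le⟩

end

theorem eps1_unique_sign_change_R_pos (γ ρm ρp K L : ℝ) (hγ : 1 < γ)
    (hρp : 0 < ρp) (hρm : ρp < ρm) (hK : 0 < K) (hL : 0 < L)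
    (hinit : (ρm ^ γ - ρp ^ γ) / ρp - K ^ 2 * ρm * (ρm - ρp) / ρp ^ 2 > 0) :
    ∃! ρb : ℝ, ρb ∈ Set.Ioo ρp ρm ∧
      (∀ ρ₁ ∈ Set.Ioo ρp ρb,
        (ρm ^ γ - ρ₁ ^ γ) / ρ₁ -
          (ρm / ρ₁) * (L * Real.sqrt (1 - ρp / ρ₁) - K * Real.sqrt (ρm / ρ₁ - 1)) ^ 2 > 0) ∧
      (∀ ρ₁ ∈ Set.Ioo ρb ρm,
        (ρm ^ γ - ρ₁ ^ γ) / ρ₁ -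
          (ρm / ρ₁) * (L * Real.sqrt (1 - ρp / ρ₁) - K * Real.sqrt (ρm / ρ₁ - 1)) ^ 2 < 0) := by
  have hγ0 : 0 < γ := zero_lt_one.trans hγ
  have hkey : K ^ 2 * ρm * (ρm - ρp) ≤ ρp * (ρm ^ γ - ρp ^ γ) := by
    rw [gt_iff_lt, sub_pos, ← mul_div_mul_left _ ρp hρp.ne', ← sq,
      div_lt_div_iff_of_pos_right (by positivity)] at hinit
    exact hinit.le
  obtain ⟨c, hc, hpos, hneg⟩ := (eps1Factor_strictAntiOn hγ0 hρp hK.le hL.le).exists_pos_neg_Ioo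
    hρm.le (eps1Factor_continuousOn.mono fun ρ hρ => hρp.trans_le hρ.1)
    (eps1Factor_left_pos hγ0 hρp hρm hK.le) (eps1Factor_right_neg hρp hρm hL)
  have hpos' : ∀ ρ ∈ Ioo ρp c, 0 < eps1 γ ρm ρp K L ρ := fun ρ hρ => by
    obtain ⟨s, hs, he⟩ :=
      exists_pos_eps1_eq_mul_eps1Factor hγ0.le hK.le hL hρp ⟨hρ.1, hρ.2.trans hc.2⟩ hkey
    exact he ▸ mul_pos hs (hpos ρ hρ)
  have hneg' : ∀ ρ ∈ Ioo c ρm, eps1 γ ρm ρp K L ρ < 0 := fun ρ hρ => by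
    obtain ⟨s, hs, he⟩ :=
      exists_pos_eps1_eq_mul_eps1Factor hγ0.le hK.le hL hρp ⟨hc.1.trans hρ.1, hρ.2⟩ hkey
    exact he ▸ mul_neg_of_pos_of_neg hs (hneg ρ hρ)
  refine ⟨c, ⟨hc, hpos', hneg'⟩, fun y ⟨hy, hy₁, hy₂⟩ => le_antisymm ?_ ?_⟩
  · exact le_of_pos_on_Ioo_of_neg_on_Ioo (f := eps1 γ ρm ρp K L) hc.1.le hy.2.le hy₁ hneg'
  · exact le_of_pos_on_Ioo_of_neg_on_Ioo (f := eps1 γ ρm ρp K L) hy.1.le hc.2.le hpos' hy₂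
end
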